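/- The map ζ intertwines the multiplication of A: as k-linear maps H ⊗ A ⊗ A → A ⊗ H one has ζ ∘ (id_H ⊗ μ_A) = (μ_A ⊗ id_H) ∘ (id_A ⊗ ζ) ∘ (ζ ⊗ id_A). Equivalently, for all h ∈ H and a, a' ∈ A, writing ζ(h ⊗ a) = Σ aᵢ ⊗ hᵢ, one has ζ(h ⊗ a a') = Σ (μ_A ⊗ id_H)(aᵢ ⊗ ζ(hᵢ ⊗ a')). -/
import Mathlib


open TensorProduct
set_option synthInstance.maxHeartbeats 400000
set_option maxHeartbeats 800000

noncomputable section

universe u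

variable {k A H X : Type u} [Field k]
  [Ring A] [Ring H] [Ring X]
  [Bialgebra k A] [Bialgebra k H] [Bialgebra k X]

/-- ζ : H ⊗ A → A ⊗ H, ζ(h ⊗ a) = ξ⁻¹(j_H(h) · j_A(a)). -/
def zetaF (jA : A →ₐc[k] X) (jH : H →ₐc[k] X) (ξ : (A ⊗[k] H) ≃ₗ[k] X) :
    H ⊗[k] A →ₗ[k] A ⊗[k] H :=
  ξ.symm.toLinearMap ∘ₗ LinearMap.mul' k X ∘ₗ
    TensorProduct.map (jH : H →ₗ[k] X) (jA : A →ₗ[k] X)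

lemma zetaF_tmul (jA : A →ₐc[k] X) (jH : H →ₐc[k] X) (ξ : (A ⊗[k] H) ≃ₗ[k] X)
    (h : H) (a : A) : zetaF jA jH ξ (h ⊗ₜ[k] a) = ξ.symm (jH h * jA a) := by
  simp [zetaF]

lemma xi_zetaF (jA : A →ₐc[k] X) (jH : H →ₐc[k] X) (ξ : (A ⊗[k] H) ≃ₗ[k] X)
    (h : H) (a : A) : ξ (zetaF jA jH ξ (h ⊗ₜ[k] a)) = jH h * jA a := by
  rw [zetaF_tmul, ξ.apply_symm_apply]

lemma aux_mul (jA : A →ₐc[k] X) (jH : H →ₐc[k] X) (ξ : (A ⊗[k] H) ≃ₗ[k] X)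
    (hξ : ∀ (a : A) (h : H), ξ (a ⊗ₜ[k] h) = jA a * jH h)
    (a : A) (y : A ⊗[k] H) :
    ξ ((TensorProduct.map (LinearMap.mul' k A) LinearMap.id)
        ((TensorProduct.assoc k A A H).symm (a ⊗ₜ[k] y))) = jA a * ξ y := by
  induction y using TensorProduct.induction_on with
  | zero => simp only [tmul_zero, map_zero, mul_zero]
  | tmul b h =>
      simp only [TensorProduct.assoc_symm_tmul, TensorProduct.map_tmul,
        LinearMap.id_apply, LinearMap.mul'_apply, hξ, map_mul, mul_assoc]
  | add y z hy hz =>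
      simp only [TensorProduct.tmul_add, map_add, hy, hz, mul_add]

lemma key_G (jA : A →ₐc[k] X) (jH : H →ₐc[k] X) (ξ : (A ⊗[k] H) ≃ₗ[k] X)
    (hξ : ∀ (a : A) (h : H), ξ (a ⊗ₜ[k] h) = jA a * jH h)
    (x : A ⊗[k] H) (a' : A) :
    ξ ((TensorProduct.map (LinearMap.mul' k A) LinearMap.id)
        ((TensorProduct.assoc k A A H).symm
          ((TensorProduct.map LinearMap.id (zetaF jA jH ξ))
            ((TensorProduct.assoc k A H A) (x ⊗ₜ[k] a')))))
      = ξ x * jA a' := by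
  induction x using TensorProduct.induction_on with
  | zero => simp only [zero_tmul, map_zero, zero_mul]
  | tmul a h =>
      simp only [TensorProduct.assoc_tmul, TensorProduct.map_tmul, LinearMap.id_apply]
      rw [aux_mul jA jH ξ hξ, xi_zetaF, hξ, mul_assoc]
  | add y z hy hz =>
      simp only [add_tmul, map_add, hy, hz, add_mul]

theorem zeta_mul_A (jA : A →ₐc[k] X) (jH : H →ₐc[k] X) (ξ : (A ⊗[k] H) ≃ₗ[k] X)
    (hξ : ∀ (a : A) (h : H), ξ (a ⊗ₜ[k] h) = jA a * jH h) :
    zetaF jA jH ξ ∘ₗ TensorProduct.map LinearMap.id (LinearMap.mul' k A)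
      = TensorProduct.map (LinearMap.mul' k A) LinearMap.id ∘ₗ
        (TensorProduct.assoc k A A H).symm.toLinearMap ∘ₗ
        TensorProduct.map LinearMap.id (zetaF jA jH ξ) ∘ₗ
        (TensorProduct.assoc k A H A).toLinearMap ∘ₗ
        TensorProduct.map (zetaF jA jH ξ) LinearMap.id ∘ₗ
        (TensorProduct.assoc k H A A).symm.toLinearMap := by
  ext h a a'
  simp only [AlgebraTensorModule.curry_apply, curry_apply, LinearMap.coe_restrictScalars]
  apply ξ.injective
  simp only [LinearMap.comp_apply, LinearEquiv.coe_coe,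
    TensorProduct.assoc_symm_tmul, TensorProduct.map_tmul, LinearMap.id_apply,
    LinearMap.mul'_apply]
  rw [xi_zetaF, key_G jA jH ξ hξ, xi_zetaF, map_mul, mul_assoc]
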